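/- Let M be a 3-connected matroid with rank 3 and corank at least 3 that has no restriction isomorphic to U_{2,5} and at least 8 elements, and suppose that for every element e, the deletion M \ e is 3-connected. If every single-element deletion of M is a rank-3 tipped spike (on 7 elements), then |E(M)| = 8 and M has no restriction isomorphic to U_{2,4}. -/

import Mathlib

/-!
Deleting any element leaves a tipped spike on `2 * 3 + 1 = 7` elements, so `M` has `8`
elements. A `4`-point line `X` avoids some element `e`; in the spike `M ＼ e` with tip `t`, the
closure of `X` contains `t`, since either `t ∈ X` or two of the four points of `X` lie on one of
the three legs, and a leg spans the tip. A rank-`2` flat through `t` contains every leg it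
meets, while two legs span rank `3`; hence `X \ {t}` lies in a single leg and `|X| ≤ 3`.
-/

open Matroid Set

namespace SpikePaper

variable {α : Type*}

/-- `C` is a circuit of the matroid `M`: a minimal dependent set. -/
def Circ (M : Matroid α) (C : Set α) : Prop :=
  M.Dep C ∧ ∀ ⦃D⦄, M.Dep D → D ⊆ C → D = C

/-- A cocircuit of `M` is a circuit of the dual matroid. -/
def Cocirc (M : Matroid α) (C : Set α) : Prop := Circ M✶ C

/-- A triangle is a 3-element circuit. -/
def Triangle (M : Matroid α) (T : Set α) : Prop := Circ M T ∧ T.encard = 3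

/-- A triad is a 3-element cocircuit. -/
def Triad (M : Matroid α) (T : Set α) : Prop := Cocirc M T ∧ T.encard = 3

/-- The rank of the set `X` in `M` equals `n`. -/
def RkEq (M : Matroid α) (X : Set α) (n : ℕ) : Prop :=
  ∃ I, M.IsBasis I X ∧ I.ncard = n

/-- The rank of `M` equals `n`. -/
def RankEq (M : Matroid α) (n : ℕ) : Prop := RkEq M M.E n

/-- Deletion of the set `D` from `M`. -/
def del (M : Matroid α) (D : Set α) : Matroid α := M ↾ (M.E \ D)

/-- Contraction of the set `C` in `M`. -/
def con (M : Matroid α) (C : Set α) : Matroid α := (del M✶ C)✶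

/-- The rank of `X` in `M`, as an extended natural number. -/
noncomputable def er (M : Matroid α) (X : Set α) : ℕ∞ :=
  ⨆ I ∈ {I | M.Indep I ∧ I ⊆ X}, I.encard

/-- `M` is 3-connected: it has no `k`-separation for `k ∈ {1, 2}`. -/
def ThreeConnected (M : Matroid α) : Prop :=
  ∀ k : ℕ, 1 ≤ k → k ≤ 2 → ∀ X Y : Set α, X ∪ Y = M.E → Disjoint X Y →
    er M X + er M Y + 1 ≤ er M M.E + (k : ℕ∞) →
    X.encard < (k : ℕ∞) ∨ Y.encard < (k : ℕ∞)

/-- `M` is simple: every subset of the ground set with at most two elements is independent. -/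
def Simple (M : Matroid α) : Prop := ∀ X ⊆ M.E, X.encard ≤ 2 → M.Indep X

/-- The labels `t, x 0, y 0, ..., x (r-1), y (r-1)` are pairwise distinct. -/
def SpikeLabels {r : ℕ} (t : α) (x y : Fin r → α) : Prop :=
  Function.Injective x ∧ Function.Injective y ∧
  (∀ i j, x i ≠ y j) ∧ (∀ i, t ≠ x i) ∧ (∀ i, t ≠ y i)

/-- `M` is a rank-`r` tipped spike with tip `t` and legs `{x i, y i}`. -/
def IsTippedSpike (M : Matroid α) (r : ℕ) (t : α) (x y : Fin r → α) : Prop :=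
  3 ≤ r ∧ SpikeLabels t x y ∧
  M.E = insert t (⋃ i, {x i, y i}) ∧
  RankEq M r ∧
  (∀ i, Circ M {t, x i, y i}) ∧
  ∀ J : Set (Fin r), J.Nonempty → J ≠ Set.univ →
    RkEq M (⋃ i ∈ J, {x i, y i}) (J.ncard + 1)

/-- `X` is a `U_{2,n}`-restriction (an `n`-point line) of `M`. -/
def LineRestriction (M : Matroid α) (X : Set α) (n : ℕ) : Prop :=
  X ⊆ M.E ∧ X.ncard = n ∧ RkEq M X 2 ∧
  ∀ p ⊆ X, p.encard = 2 → M.Indep p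

/-- `X` is a `U_{3,5}`-restriction of `M`. -/
def U35Restriction (M : Matroid α) (X : Set α) : Prop :=
  X ⊆ M.E ∧ X.ncard = 5 ∧ RkEq M X 3 ∧
  ∀ S ⊆ X, S.encard ≤ 3 → M.Indep S

/-- `{u, v}` is contained in three distinct 4-element circuits of `M`. -/
def ThreeFourCircs (M : Matroid α) (u v : α) : Prop :=
  ∃ C1 C2 C3 : Set α, Circ M C1 ∧ Circ M C2 ∧ Circ M C3 ∧
    C1.encard = 4 ∧ C2.encard = 4 ∧ C3.encard = 4 ∧
    C1 ≠ C2 ∧ C1 ≠ C3 ∧ C2 ≠ C3 ∧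
    {u, v} ⊆ C1 ∧ {u, v} ⊆ C2 ∧ {u, v} ⊆ C3

lemma del_eq_delete (M : Matroid α) (D : Set α) : del M D = M ＼ D := rfl

lemma circ_iff_isCircuit {M : Matroid α} {C : Set α} : Circ M C ↔ M.IsCircuit C := by
  rw [isCircuit_def, minimal_subset_iff]
  simp_rw [eq_comm (a := C)]
  rfl

lemma RkEq.eRk_eq {M : Matroid α} {X : Set α} {n : ℕ} (h : RkEq M X n) (hn : n ≠ 0) :
    M.eRk X = n := by
  obtain ⟨I, hI, rfl⟩ := h
  rw [hI.eRk_eq_encard, (finite_of_ncard_ne_zero hn).cast_ncard_eq]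

namespace IsTippedSpike

variable {N : Matroid α} {r : ℕ} {t a b : α} {x y : Fin r → α} {X : Set α}

lemma encard_ground (h : IsTippedSpike N r t x y) : N.E.encard = 2 * r + 1 := by
  obtain ⟨-, ⟨hx, hy, hxy, htx, hty⟩, hE, -⟩ := h
  have hlegs : ⋃ i, ({x i, y i} : Set α) = range x ∪ range y := by
    simp_rw [insert_eq, iUnion_union_distrib, iUnion_singleton_eq_range]
  have hrange : ∀ f : Fin r → α, f.Injective → (range f).encard = r := fun f hf => by
    rw [← image_univ, hf.encard_image, encard_univ, ENat.card_eq_coe_natCard, Nat.card_fin]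
  have hdisj : Disjoint (range x) (range y) := by
    rw [disjoint_iff_forall_ne]
    rintro _ ⟨i, rfl⟩ _ ⟨j, rfl⟩
    exact hxy i j
  have ht : t ∉ range x ∪ range y := by
    rintro (⟨i, hi⟩ | ⟨i, hi⟩)
    exacts [htx i hi.symm, hty i hi.symm]
  rw [hE, hlegs, encard_insert_of_notMem ht, encard_union_eq hdisj, hrange x hx, hrange y hy]
  ring

lemma exists_mem_leg (h : IsTippedSpike N r t x y) (ha : a ∈ N.E) (hat : a ≠ t) :
    ∃ i, a ∈ ({x i, y i} : Set α) := by
  rw [h.2.2.1, mem_insert_iff] at ha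
  simpa [hat] using ha

lemma isCircuit_leg (h : IsTippedSpike N r t x y) (i : Fin r) :
    N.IsCircuit {t, x i, y i} :=
  circ_iff_isCircuit.1 (h.2.2.2.2.1 i)

lemma tip_mem_closure_leg (h : IsTippedSpike N r t x y) (i : Fin r) :
    t ∈ N.closure {x i, y i} :=
  N.closure_subset_closure (sdiff_singleton_subset_iff.2 subset_rfl)
    ((h.isCircuit_leg i).mem_closure_sdiff_singleton_of_mem (mem_insert t _))

lemma leg_subset_closure (h : IsTippedSpike N r t x y) {i : Fin r}
    (ha : a ∈ ({x i, y i} : Set α)) : {x i, y i} ⊆ N.closure {t, a} := by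
  have hC := h.isCircuit_leg i
  refine (subset_insert t _).trans ?_
  rcases ha with rfl | rfl
  · exact (hC.subset_closure_sdiff_singleton (y i)).trans
      (N.closure_subset_closure (sdiff_singleton_subset_iff.2 (by grind)))
  · exact (hC.subset_closure_sdiff_singleton (x i)).trans
      (N.closure_subset_closure (sdiff_singleton_subset_iff.2 (by grind)))

lemma eRk_union_legs (h : IsTippedSpike N r t x y) {i j : Fin r} (hij : i ≠ j) :
    N.eRk ({x i, y i} ∪ {x j, y j}) = 3 := by
  have hJ : ({i, j} : Set (Fin r)).ncard = 2 := ncard_pair hij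
  have hJu : ({i, j} : Set (Fin r)) ≠ univ := fun hu => by
    have hr := h.1
    rw [hu, ncard_univ, Nat.card_fin] at hJ
    omega
  have := (h.2.2.2.2.2 {i, j} (insert_nonempty i _) hJu).eRk_eq (by omega)
  rwa [biUnion_pair, hJ] at this

lemma leg_eq_of_tip_mem_closure (h : IsTippedSpike N r t x y) (hXE : X ⊆ N.E)
    (hX : N.eRk X ≤ 2) (ht : t ∈ N.closure X) {i j : Fin r} (ha : a ∈ X)
    (hai : a ∈ ({x i, y i} : Set α)) (hb : b ∈ X) (hbj : b ∈ ({x j, y j} : Set α)) :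
    i = j := by
  by_contra hij
  have hleg : ∀ {c k}, c ∈ X → c ∈ ({x k, y k} : Set α) → {x k, y k} ⊆ N.closure X :=
    fun hc hck => (h.leg_subset_closure hck).trans <| closure_subset_closure_of_subset_closure
      (insert_subset ht (singleton_subset_iff.2 (N.mem_closure_of_mem hc)))
  have := calc (3 : ℕ∞) = N.eRk ({x i, y i} ∪ {x j, y j}) := (h.eRk_union_legs hij).symm
    _ ≤ N.eRk (N.closure X) := N.eRk_mono (union_subset (hleg ha hai) (hleg hb hbj))
    _ ≤ 2 := (N.eRk_closure_eq X).trans_le hX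
  exact absurd this (by decide)

lemma exists_leg_subset (h : IsTippedSpike N r t x y) (hX : X ⊆ N.E \ {t})
    (hr : r < X.encard) : ∃ i, {x i, y i} ⊆ X := by
  have : NeZero r := ⟨by have := h.1; omega⟩
  choose! f hf using fun a (ha : a ∈ X) => h.exists_mem_leg (hX ha).1 (hX ha).2
  obtain ⟨a, ha, b, hb, hab, hfab⟩ := exists_ne_map_eq_of_encard_lt_of_maps_to
    (t := univ) (by rwa [encard_univ, ENat.card_eq_coe_natCard, Nat.card_fin]) (mapsTo_univ f X)
  refine ⟨f a, fun c hc => ?_⟩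
  have hfa := hf a ha
  have hfb := hf b hb
  rw [← hfab] at hfb
  grind

lemma encard_le_of_eRk_le_two (h : IsTippedSpike N r t x y) (hXE : X ⊆ N.E)
    (hX : N.eRk X ≤ 2) : X.encard ≤ max (r : ℕ∞) 3 := by
  by_contra! hlt
  obtain ⟨hr, h3⟩ := max_lt_iff.1 hlt
  have ht : t ∈ N.closure X := by
    by_cases htX : t ∈ X
    · exact N.mem_closure_of_mem htX
    obtain ⟨i, hi⟩ := h.exists_leg_subset (subset_sdiff_singleton hXE htX) hr
    exact N.closure_subset_closure hi (h.tip_mem_closure_leg i)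
  obtain ⟨a, ha, hat⟩ : (X \ {t}).Nonempty := sdiff_nonempty.2 fun hXt => by
    have := (encard_le_encard hXt).trans_eq (encard_singleton t)
    exact absurd (h3.trans_le this) (by decide)
  obtain ⟨i, hai⟩ := h.exists_mem_leg (hXE ha) hat
  have hXt : X ⊆ insert t {x i, y i} := fun b hb => by
    by_cases hbt : b = t
    · exact hbt ▸ mem_insert b _
    obtain ⟨j, hbj⟩ := h.exists_mem_leg (hXE hb) hbt
    rw [← h.leg_eq_of_tip_mem_closure hXE hX ht ha hai hb hbj] at hbj
    exact mem_insert_of_mem t hbj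
  have := calc X.encard ≤ (insert t {x i, y i} : Set α).encard := encard_le_encard hXt
    _ ≤ ({x i, y i} : Set α).encard + 1 := encard_insert_le _ _
    _ ≤ (({y i} : Set α).encard + 1) + 1 := by gcongr; exact encard_insert_le _ _
    _ = 3 := by rw [encard_singleton]; rfl
  exact absurd (h3.trans_le this) (by decide)

end IsTippedSpike

lemma encard_ground_of_isTippedSpike_del {M : Matroid α} {e t : α} {r : ℕ} {x y : Fin r → α}
    (he : e ∈ M.E) (h : IsTippedSpike (del M {e}) r t x y) : M.E.encard = 2 * r + 2 := by
  rw [← encard_sdiff_singleton_add_one he, ← delete_ground, ← del_eq_delete, h.encard_ground]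
  ring

theorem stmt16_general {α : Type*} (M : Matroid α)
    (hcard : 8 ≤ M.E.ncard)
    (hdelspike : ∀ e ∈ M.E, ∃ (t : α) (x y : Fin 3 → α),
      IsTippedSpike (del M {e}) 3 t x y) :
    M.E.ncard = 8 ∧ ∀ X, ¬ LineRestriction M X 4 := by
  obtain ⟨e, he⟩ := nonempty_of_ncard_ne_zero (by omega : M.E.ncard ≠ 0)
  obtain ⟨_, _, _, hspike⟩ := hdelspike e he
  have hE : M.E.encard = 8 := encard_ground_of_isTippedSpike_del he hspike
  refine ⟨by rw [ncard_def, hE]; rfl, ?_⟩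
  rintro X ⟨hXE, hX4, hXrk, -⟩
  have hX : X.encard = 4 := by
    rw [← (finite_of_ncard_ne_zero (by omega : X.ncard ≠ 0)).cast_ncard_eq, hX4]
    rfl
  obtain ⟨f, hf, hfX⟩ : (M.E \ X).Nonempty := sdiff_nonempty.2 fun hEX => by
    have := encard_le_encard hEX
    rw [hE, hX] at this
    exact absurd this (by decide)
  obtain ⟨_, _, _, hspike⟩ := hdelspike f hf
  have hXN : X ⊆ (del M {f}).E := subset_sdiff_singleton hXE hfX
  have hrk : (del M {f}).eRk X = 2 := by
    rw [del_eq_delete, delete_eq_restrict, restrict_eRk_eq (R := M.E \ {f}) _ hXN,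
      hXrk.eRk_eq two_ne_zero]
    rfl
  have := hspike.encard_le_of_eRk_le_two hXN hrk.le
  rw [hX] at this
  exact absurd this (by decide)

/-- a 3-connected simple rank-3 matroid with corank at least 3, no
`U_{2,5}`-restriction, at least 8 elements, all of whose single-element deletions are
3-connected rank-3 tipped spikes, has exactly 8 elements and no `U_{2,4}`-restriction. -/
theorem stmt16 {α : Type*} (M : Matroid α) (h3 : ThreeConnected M) (hsimp : Simple M)
    (hrk : RankEq M 3) (hcor : ∃ k, RankEq M✶ k ∧ 3 ≤ k)
    (hnoU25 : ∀ X, ¬ LineRestriction M X 5)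
    (hcard : 8 ≤ M.E.ncard)
    (hdel3 : ∀ e ∈ M.E, ThreeConnected (del M {e}))
    (hdelspike : ∀ e ∈ M.E, ∃ (t : α) (x y : Fin 3 → α),
      IsTippedSpike (del M {e}) 3 t x y) :
    M.E.ncard = 8 ∧ ∀ X, ¬ LineRestriction M X 4 :=
  stmt16_general M hcard hdelspike

end SpikePaper
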